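/- arXiv:1609.08743 — 4 statements merged into one kernel-verified Lean document; each statement's English description precedes it below -/
import Mathlib

section
/- Let a ∈ (0,1), b ≥ 1−a, and define g₁(y) = y² + (p²/k)y + h(p+β)/k². If α < √3·β and 4h(β+p) ≥ p⁴, then g₁(y) ≥ 0 for all y ∈ (−h/(αk), 0). -/
open Real Set

theorem stmt5 (a b α β p h k : ℝ)
    (ha : a ∈ Ioo (0:ℝ) 1) (hb : 1 - a ≤ b)
    (hα : α = a * (b + 1)) (hβ : β = b * (1 - a)) (hp : p = a + b)
    (hh : h = α * β * (p + β)) (hk : k = β * (p + 1) + p)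
    (hcase : α < Real.sqrt 3 * β) (hcase2 : 4 * h * (β + p) ≥ p ^ 4) :
    ∀ y ∈ Ioo (-(h / (α * k))) (0:ℝ),
      0 ≤ y ^ 2 + (p ^ 2 / k) * y + h * (p + β) / k ^ 2 := by
  obtain ⟨ha0, ha1⟩ := ha
  have hb0 : 0 < b := lt_of_lt_of_le (by linarith) hb
  have hβ0 : 0 < β := by rw [hβ]; nlinarith
  have hp0 : 0 < p := by rw [hp]; linarith
  have hk0 : 0 < k := by rw [hk]; nlinarith
  intro y hy
  have key : 0 ≤ (2 * k * y + p ^ 2) ^ 2 + (4 * h * (β + p) - p ^ 4) := by nlinarith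
  have heq : y ^ 2 + (p ^ 2 / k) * y + h * (p + β) / k ^ 2
      = ((2 * k * y + p ^ 2) ^ 2 + (4 * h * (β + p) - p ^ 4)) / (4 * k ^ 2) := by
    field_simp
    ring
  rw [heq]
  exact div_nonneg key (by positivity)
end

section
/- Let a ∈ (0,1), b ≥ 1−a, and let D = {(x,y) : 0 < x < (β+p)/k, −βx < y < 0}. Define g(x,y) = y² + ((p+1)x − 1)y + αβx² on D. If α, β, p, h satisfy either α ≥ √3·β, or (α < √3·β and 4h(β+p) ≥ p⁴), then g(x,y) ≥ 0 for all (x,y) ∈ D and inf_{(x,y) ∈ D} g(x,y) = 0. -/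
set_option maxHeartbeats 1000000


open Real Set

private lemma aux_nonneg (α β p x y r : ℝ) (hα0 : 0 < α) (hβ0 : 0 < β)
    (hs : α + β = p) (hr : 0 ≤ r) (hr2 : r ^ 2 = α * β)
    (hcase : β ≤ r ∨ p ^ 2 ≤ 2 * r * (β + p))
    (hx : 0 < x) (hkx : (β * (p + 1) + p) * x < β + p)
    (hy1 : -(β * x) < y) (hy2 : y < 0) :
    0 ≤ y ^ 2 + ((p + 1) * x - 1) * y + α * β * x ^ 2 := by
  obtain rfl : α = p - β := by linarith
  have hp0 : 0 < p := by linarith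
  rcases le_or_gt ((p + 1) * x) 1 with h1 | h1
  · nlinarith [mul_nonneg (by linarith : (0:ℝ) ≤ 1 - (p + 1) * x) (by linarith : (0:ℝ) ≤ -y),
      sq_nonneg y, mul_pos (mul_pos hα0 hβ0) (pow_pos hx 2)]
  rcases le_or_gt (2 * (β * x)) ((p + 1) * x - 1) with h2 | h2
  · have hx1 : x < 1 := by nlinarith [mul_pos hβ0 hp0]
    nlinarith [mul_nonneg (by linarith : (0:ℝ) ≤ y + β * x)
        (by linarith : (0:ℝ) ≤ y - β * x + ((p + 1) * x - 1)),
      mul_pos (mul_pos hβ0 hx) (by linarith : (0:ℝ) < 1 - x)]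
  · have key : (p + 1) * x - 1 < 2 * r * x := by
      rcases hcase with hc | hc
      · nlinarith [mul_pos hβ0 hx]
      · rcases le_or_gt (p + 1) (2 * r) with hlt | hlt
        · nlinarith
        · have hk0 : 0 < β * (p + 1) + p := by nlinarith
          have h3 : (p + 1 - 2 * r) * ((β * (p + 1) + p) * x) <
              (p + 1 - 2 * r) * (β + p) :=
            mul_lt_mul_of_pos_left hkx (by linarith)
          have h4 : (p + 1 - 2 * r) * (β + p) ≤ β * (p + 1) + p := by nlinarith
          nlinarith [mul_pos hk0 hx]
    have hA0 : 0 ≤ (p + 1) * x - 1 := by linarith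
    have hsq : ((p + 1) * x - 1) ^ 2 < (2 * r * x) ^ 2 := by
      exact pow_lt_pow_left₀ key hA0 (by norm_num)
    have hid : (2 * r * x) ^ 2 = 4 * ((p - β) * β) * x ^ 2 := by
      rw [show (2 * r * x) ^ 2 = 4 * r ^ 2 * x ^ 2 by ring, hr2]
    nlinarith [sq_nonneg (2 * y + ((p + 1) * x - 1)), hsq, hid]

theorem stmt7 (a b α β p h k : ℝ)
    (ha : a ∈ Ioo (0:ℝ) 1) (hb : 1 - a ≤ b)
    (hα : α = a * (b + 1)) (hβ : β = b * (1 - a)) (hp : p = a + b)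
    (hh : h = α * β * (p + β)) (hk : k = β * (p + 1) + p)
    (hcase : α ≥ Real.sqrt 3 * β ∨ (α < Real.sqrt 3 * β ∧ 4 * h * (β + p) ≥ p ^ 4)) :
    let g : ℝ → ℝ → ℝ := fun x y => y ^ 2 + ((p + 1) * x - 1) * y + α * β * x ^ 2
    (∀ x y : ℝ, 0 < x → x < (β + p) / k → -(β * x) < y → y < 0 → 0 ≤ g x y) ∧
      sInf {z : ℝ | ∃ x y : ℝ,
        0 < x ∧ x < (β + p) / k ∧ -(β * x) < y ∧ y < 0 ∧ z = g x y} = 0 := by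
  intro g
  obtain ⟨ha0, ha1⟩ := ha
  have hb0 : 0 < b := by linarith
  have hα0 : 0 < α := by rw [hα]; positivity
  have hβ0 : 0 < β := by rw [hβ]; nlinarith
  have hp0 : 0 < p := by rw [hp]; linarith
  have hs : α + β = p := by rw [hα, hβ, hp]; ring
  have hk0 : 0 < k := by rw [hk]; nlinarith
  have hβp : 0 < β + p := by linarith
  set r : ℝ := Real.sqrt (α * β) with hrdef
  have hr : 0 ≤ r := Real.sqrt_nonneg _
  have hr2 : r ^ 2 = α * β := Real.sq_sqrt (by positivity)
  have hsqrt3 : (1:ℝ) ≤ Real.sqrt 3 := by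
    rw [show (1:ℝ) = Real.sqrt 1 from (Real.sqrt_one).symm]
    exact Real.sqrt_le_sqrt (by norm_num)
  have hcase' : β ≤ r ∨ p ^ 2 ≤ 2 * r * (β + p) := by
    rcases hcase with hc | ⟨_, hc⟩
    · left
      have hαβ : β ≤ α := by nlinarith
      nlinarith [sq_nonneg (r - β), sq_nonneg (r + β)]
    · right
      have h4 : (p ^ 2) ^ 2 ≤ (2 * r * (β + p)) ^ 2 := by
        rw [show (2 * r * (β + p)) ^ 2 = 4 * (r ^ 2) * (β + p) ^ 2 by ring, hr2]
        nlinarith [hh]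
      nlinarith [sq_nonneg p, mul_nonneg (mul_nonneg (by norm_num : (0:ℝ) ≤ 2) hr) hβp.le,
        sq_nonneg (p ^ 2 - 2 * r * (β + p)), sq_nonneg (p ^ 2 + 2 * r * (β + p))]
  have hmain : ∀ x y : ℝ, 0 < x → x < (β + p) / k → -(β * x) < y → y < 0 → 0 ≤ g x y := by
    intro x y hx hxk hy1 hy2
    have hkx : (β * (p + 1) + p) * x < β + p := by
      rw [← hk]
      exact (lt_div_iff₀' hk0).mp hxk
    exact aux_nonneg α β p x y r hα0 hβ0 hs hr hr2 hcase' hx hkx hy1 hy2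
  refine ⟨hmain, ?_⟩
  set S : Set ℝ := {z : ℝ | ∃ x y : ℝ,
      0 < x ∧ x < (β + p) / k ∧ -(β * x) < y ∧ y < 0 ∧ z = g x y} with hSdef
  have hSlb : ∀ z ∈ S, (0:ℝ) ≤ z := by
    rintro z ⟨x, y, hx, hxk, hy1, hy2, rfl⟩
    exact hmain x y hx hxk hy1 hy2
  have hbdd : BddBelow S := ⟨0, hSlb⟩
  have hd : 0 < (β + p) / k := div_pos hβp hk0
  have hmem : ∀ t : ℝ, 0 < t → t < (β + p) / k → g t (-(β * t / 2)) ∈ S := by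
    intro t ht htk
    exact ⟨t, -(β * t / 2), ht, htk, by nlinarith [mul_pos hβ0 ht],
      by nlinarith [mul_pos hβ0 ht], rfl⟩
  have hne : S.Nonempty := ⟨_, hmem (((β + p) / k) / 2) (by linarith) (by linarith)⟩
  have h1 : 0 ≤ sInf S := le_csInf hne hSlb
  have h2 : sInf S ≤ 0 := by
    apply le_of_forall_pos_le_add
    intro ε hε
    have hM : 0 < β ^ 2 / 4 + α * β + β / 2 := by positivity
    set t : ℝ := min (((β + p) / k) / 2) (min 1 (ε / (2 * (β ^ 2 / 4 + α * β + β / 2))))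
      with htdef
    have ht : 0 < t := by
      apply lt_min (by linarith)
      exact lt_min one_pos (by positivity)
    have htk : t < (β + p) / k := lt_of_le_of_lt (min_le_left _ _) (by linarith)
    have ht1 : t ≤ 1 := le_trans (min_le_right _ _) (min_le_left _ _)
    have htε : 2 * (β ^ 2 / 4 + α * β + β / 2) * t ≤ ε := by
      have : t ≤ ε / (2 * (β ^ 2 / 4 + α * β + β / 2)) :=
        le_trans (min_le_right _ _) (min_le_right _ _)
      calc 2 * (β ^ 2 / 4 + α * β + β / 2) * t
          ≤ 2 * (β ^ 2 / 4 + α * β + β / 2) * (ε / (2 * (β ^ 2 / 4 + α * β + β / 2))) := by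
            apply mul_le_mul_of_nonneg_left this (by positivity)
        _ = ε := by field_simp
    have hzS : g t (-(β * t / 2)) ∈ S := hmem t ht htk
    have htt : t ^ 2 ≤ t := by nlinarith
    have hzle : g t (-(β * t / 2)) ≤ ε := by
      show (-(β * t / 2)) ^ 2 + ((p + 1) * t - 1) * (-(β * t / 2)) + α * β * t ^ 2 ≤ ε
      nlinarith [mul_le_mul_of_nonneg_left htt (sq_nonneg β),
        mul_le_mul_of_nonneg_left htt (le_of_lt (mul_pos hα0 hβ0)),
        mul_nonneg (mul_nonneg (by linarith : (0:ℝ) ≤ p + 1) hβ0.le) (sq_nonneg t)]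
    calc sInf S ≤ g t (-(β * t / 2)) := csInf_le hbdd hzS
      _ ≤ ε := hzle
      _ = 0 + ε := by ring
  linarith
end

section
/- Let a ∈ (0,1), b ≥ 1−a, let c, d > 0 with 0 < c/d ≤ (β+p)/k, let δ ∈ (a−1, 0), and set u = a−δ, v = b+δ. For n ∈ ℕ, n ≥ 1, define Q(n) = [Γ(u+n−1)Γ(v+n)/(Γ(a+n−1)Γ(b+n))]·{(c/d − 1)(u+v+n) + u(v+1)}. Then Q(n) is strictly decreasing in n, and Q(n) → −∞ as n → ∞. -/
open Real Set Filter Topology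

private lemma auxQt (g c w : ℝ) (hg1 : g < 1) (hw0 : 0 < w) (hwg : w < g) (hc : 0 ≤ c) :
    0 < w + c + 2*c*w + 2*c^2 + c^3 + 2*g^2*c^3 + g^2*c^4 + 4*g^3*c*w + 4*g^3*c^2
      + 2*g^3*c^2*w + 2*g^3*c^3 + 2*g^4*w + 2*g^4*c + g^4*c*w + g^4*c^2
      - w^3 - 2*c*w^2 - c*w^3 - 2*c^2*w^2 - c^3*w - 2*g*c*w^3 - 4*g*c^2*w^2
      - g*c^2*w^3 - 2*g*c^3*w - 2*g*c^3*w^2 - g*c^4*w - 2*g^2*w^3 - 4*g^2*c*w^2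
      - g^2*c*w^3 - 2*g^2*c^2*w^2 := by
  have hw1 : w < 1 := hwg.trans hg1
  have h1w : (0:ℝ) ≤ 1 - w := by linarith
  have hgw : (0:ℝ) ≤ g - w := by linarith
  have hgw2 : (0:ℝ) ≤ g^2 - w^2 := by nlinarith
  have hw2 : (0:ℝ) < 1 - w^2 := by nlinarith
  have hw3 : (0:ℝ) ≤ 1 - w^3 := by nlinarith
  have hg0 : 0 < g := hw0.trans hwg
  have T1 : 0 < w*(1-w^2) := mul_pos hw0 hw2
  have T2 : 0 ≤ 2*(c*w)*(1-w) := by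
    have := mul_nonneg (mul_nonneg hc hw0.le) h1w; linarith
  have T3 : 0 ≤ c*(1-w^3) := mul_nonneg hc hw3
  have T4 : 0 ≤ 2*c^2*(1-w^2) := by nlinarith [mul_nonneg (sq_nonneg c) hw2.le]
  have T5 : 0 ≤ c^3*(1-w) := mul_nonneg (by positivity) h1w
  have T6 : 0 ≤ 2*(g*c*w)*(g^2-w^2) := by
    have := mul_nonneg (by positivity : (0:ℝ) ≤ g*c*w) hgw2; linarith
  have T7 : 0 ≤ 4*(g*c^2)*(g^2-w^2) := by
    have := mul_nonneg (by positivity : (0:ℝ) ≤ g*c^2) hgw2; linarith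
  have T8 : 0 ≤ (g*c^2*w)*(g^2-w^2) := mul_nonneg (by positivity) hgw2
  have T9 : 0 ≤ 2*(g*c^3)*(g-w) := by
    have := mul_nonneg (by positivity : (0:ℝ) ≤ g*c^3) hgw; linarith
  have T10 : 0 ≤ 2*(g*c^3)*(g^2-w^2) := by
    have := mul_nonneg (by positivity : (0:ℝ) ≤ g*c^3) hgw2; linarith
  have T11 : 0 ≤ (g*c^4)*(g-w) := mul_nonneg (by positivity) hgw
  have T12 : 0 ≤ 2*(g^2*w)*(g^2-w^2) := by
    have := mul_nonneg (by positivity : (0:ℝ) ≤ g^2*w) hgw2; linarith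
  have T13 : 0 ≤ 2*(g^2*c*w)*(g-w) := by
    have := mul_nonneg (by positivity : (0:ℝ) ≤ g^2*c*w) hgw; linarith
  have T14 : 0 ≤ 2*(g^2*c)*(g^2-w^2) := by
    have := mul_nonneg (by positivity : (0:ℝ) ≤ g^2*c) hgw2; linarith
  have T15 : 0 ≤ (g^2*c*w)*(g^2-w^2) := mul_nonneg (by positivity) hgw2
  have T16 : 0 ≤ (g^2*c^2*w)*(g-w) := mul_nonneg (by positivity) hgw
  have T17 : 0 ≤ (g^2*c^2)*(g^2-w^2) := mul_nonneg (by positivity) hgw2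
  linarith

set_option maxHeartbeats 1000000 in
private lemma auxF (a b δ ε t : ℝ) (ha0 : 0 < a) (ha1 : a < 1) (hb : 1 - a ≤ b)
    (hδ1 : a - 1 < δ) (hδ2 : δ < 0) (ht : 1 ≤ t)
    (hεk : ε * (b*(1-a)*((a+b)+1) + (a+b)) ≤ -(b*(1-a)*(a+b))) :
    ε*((a+t-1)*(b+t)) + δ*(a-b-1-δ)*(ε*(a+b+t+1) + (a-δ)*(b+δ+1)) < 0 := by
  have hb0 : 0 < b := by linarith
  have hm : 0 < δ*(a-b-1-δ) := mul_pos_of_neg_of_neg hδ2 (by linarith)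
  have hβp : 0 < b*(1-a)*(a+b) :=
    mul_pos (mul_pos hb0 (by linarith)) (by linarith)
  have hK0 : 0 < b*(1-a)*((a+b)+1) + (a+b) := by
    have := mul_pos (mul_pos hb0 (show (0:ℝ) < 1-a by linarith)) (show (0:ℝ) < (a+b)+1 by linarith)
    linarith
  have hε0 : ε < 0 := by
    by_contra h
    push_neg at h
    nlinarith [mul_nonneg h hK0.le]
  have hQ := auxQt (1-a) (a+b-1) (1-a+δ) (by linarith) (by linarith) (by linarith) (by linarith)
  have hD : 0 < b*(1-a)*(a+b)*(a*(b+1)) + b*(1-a)*(a+b)*(δ*(a-b-1-δ))*(a+b+2)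
      - (b*(1-a)*((a+b)+1) + (a+b))*(δ*(a-b-1-δ))*((a-δ)*(b+δ+1)) := by
    have hw : (0:ℝ) < 1-a+δ := by linarith
    have h2 := mul_pos hw hQ
    linarith [h2]
  have hC : a*(b+1) + δ*(a-b-1-δ)*(a+b+2)
      ≤ (a+t-1)*(b+t) + δ*(a-b-1-δ)*(a+b+t+1) := by
    have h1 := mul_nonneg (sub_nonneg.2 ht) (show (0:ℝ) ≤ t+a+b by linarith)
    have h2 := mul_nonneg (sub_nonneg.2 ht) hm.le
    nlinarith [h1, h2]
  have hC1 : 0 < a*(b+1) + δ*(a-b-1-δ)*(a+b+2) := by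
    have h1 := mul_pos ha0 (show (0:ℝ) < b+1 by linarith)
    have h2 := mul_pos hm (show (0:ℝ) < a+b+2 by linarith)
    linarith
  have step1 : ε*((a+t-1)*(b+t) + δ*(a-b-1-δ)*(a+b+t+1))
      ≤ ε*(a*(b+1) + δ*(a-b-1-δ)*(a+b+2)) := mul_le_mul_of_nonpos_left hC hε0.le
  have step2 : ε * (b*(1-a)*((a+b)+1) + (a+b)) * (a*(b+1) + δ*(a-b-1-δ)*(a+b+2))
      ≤ -(b*(1-a)*(a+b)) * (a*(b+1) + δ*(a-b-1-δ)*(a+b+2)) :=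
    mul_le_mul_of_nonneg_right hεk hC1.le
  have step1k := mul_le_mul_of_nonneg_right step1 hK0.le
  have hgoalK : (ε*((a+t-1)*(b+t)) + δ*(a-b-1-δ)*(ε*(a+b+t+1) + (a-δ)*(b+δ+1)))
      * (b*(1-a)*((a+b)+1) + (a+b)) < 0 := by
    linarith [step1k, step2, hD]
  by_contra hcon
  push_neg at hcon
  linarith [mul_nonneg hcon hK0.le, hgoalK]


set_option maxHeartbeats 1600000 in
theorem stmt12 (a b c d δ β p k : ℝ)
    (ha : a ∈ Ioo (0:ℝ) 1) (hb : 1 - a ≤ b)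
    (hβ : β = b * (1 - a)) (hp : p = a + b) (hk : k = β * (p + 1) + p)
    (hc : 0 < c) (hd : 0 < d) (hcd : c / d ≤ (β + p) / k)
    (hδ : δ ∈ Ioo (a - 1) (0:ℝ)) :
    let u : ℝ := a - δ
    let v : ℝ := b + δ
    let Q : ℕ → ℝ := fun n =>
      Real.Gamma (u + n - 1) * Real.Gamma (v + n) /
          (Real.Gamma (a + n - 1) * Real.Gamma (b + n)) *
        ((c / d - 1) * (u + v + n) + u * (v + 1))
    StrictAntiOn Q (Ici 1) ∧ Tendsto Q atTop atBot := by
  intro u v Q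
  obtain ⟨ha0, ha1⟩ := ha
  obtain ⟨hδ1, hδ2⟩ := hδ
  subst hk; subst hβ; subst hp
  have hb0 : 0 < b := by linarith
  have hK0 : 0 < b*(1-a)*((a+b)+1) + (a+b) := by
    have := mul_pos (mul_pos hb0 (show (0:ℝ) < 1-a by linarith))
      (show (0:ℝ) < (a+b)+1 by linarith)
    linarith
  have hβp : 0 < b*(1-a)*(a+b) :=
    mul_pos (mul_pos hb0 (by linarith)) (by linarith)
  have hεk : (c/d-1) * (b*(1-a)*((a+b)+1) + (a+b)) ≤ -(b*(1-a)*(a+b)) := by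
    have h1 : c/d*(b*(1-a)*((a+b)+1) + (a+b)) ≤ b*(1-a) + (a+b) := by
      have := (le_div_iff₀ hK0).mp hcd
      linarith
    nlinarith [h1]
  have hε0 : c/d - 1 < 0 := by
    by_contra h
    push_neg at h
    nlinarith [mul_nonneg h hK0.le]
  have hm : 0 < δ*(a-b-1-δ) := mul_pos_of_neg_of_neg hδ2 (by linarith)
  -- the step inequality
  have hstep : ∀ n : ℕ, 1 ≤ n → Q (n+1) < Q n := by
    intro n hn
    have hn1 : (1:ℝ) ≤ (n:ℝ) := by exact_mod_cast hn
    have hx : 0 < a + (n:ℝ) - 1 := by linarith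
    have hy : 0 < b + (n:ℝ) := by linarith
    have hux : 0 < a - δ + (n:ℝ) - 1 := by linarith
    have hvy : 0 < b + δ + (n:ℝ) := by linarith
    have hΓu := Real.Gamma_pos_of_pos hux
    have hΓv := Real.Gamma_pos_of_pos hvy
    have hΓa := Real.Gamma_pos_of_pos hx
    have hΓb := Real.Gamma_pos_of_pos hy
    have g1 : Real.Gamma (a - δ + ((n:ℝ)+1) - 1)
        = (a - δ + (n:ℝ) - 1) * Real.Gamma (a - δ + (n:ℝ) - 1) := by
      rw [show a - δ + ((n:ℝ)+1) - 1 = (a - δ + (n:ℝ) - 1) + 1 by ring,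
        Real.Gamma_add_one (ne_of_gt hux)]
    have g2 : Real.Gamma (b + δ + ((n:ℝ)+1))
        = (b + δ + (n:ℝ)) * Real.Gamma (b + δ + (n:ℝ)) := by
      rw [show b + δ + ((n:ℝ)+1) = (b + δ + (n:ℝ)) + 1 by ring,
        Real.Gamma_add_one (ne_of_gt hvy)]
    have g3 : Real.Gamma (a + ((n:ℝ)+1) - 1)
        = (a + (n:ℝ) - 1) * Real.Gamma (a + (n:ℝ) - 1) := by
      rw [show a + ((n:ℝ)+1) - 1 = (a + (n:ℝ) - 1) + 1 by ring,
        Real.Gamma_add_one (ne_of_gt hx)]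
    have g4 : Real.Gamma (b + ((n:ℝ)+1))
        = (b + (n:ℝ)) * Real.Gamma (b + (n:ℝ)) := by
      rw [show b + ((n:ℝ)+1) = (b + (n:ℝ)) + 1 by ring,
        Real.Gamma_add_one (ne_of_gt hy)]
    have hS := auxF a b δ (c/d-1) (n:ℝ) ha0 ha1 hb hδ1 hδ2 hn1 hεk
    simp only [Q, u, v]
    push_cast
    rw [g1, g2, g3, g4, div_mul_eq_mul_div, div_mul_eq_mul_div, div_lt_div_iff₀ (by positivity) (by positivity)]
    have hP : 0 < Real.Gamma (a-δ+(n:ℝ)-1) * Real.Gamma (b+δ+(n:ℝ))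
        * (Real.Gamma (a+(n:ℝ)-1) * Real.Gamma (b+(n:ℝ))) := by positivity
    linarith [mul_lt_mul_of_pos_right hS hP]
  constructor
  · intro m hm' nn hnn' hmn
    have hm1 : 1 ≤ m := hm'
    clear hm' hnn'
    induction nn with
    | zero => omega
    | succ kk ih =>
      rcases Nat.lt_succ_iff_lt_or_eq.mp hmn with h | h
      · exact (hstep kk (by omega)).trans (ih h)
      · subst h; exact hstep m hm1
  · set GG : ℕ → ℝ := fun n =>
      Real.Gamma (a - δ + n - 1) * Real.Gamma (b + δ + n) /
        (Real.Gamma (a + n - 1) * Real.Gamma (b + n)) with hGG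
    have hQG : ∀ n : ℕ,
        Q n = GG n * ((c/d-1)*(a+b+(n:ℝ)) + (a-δ)*((b+δ)+1)) := by
      intro n
      simp only [Q, GG, u, v]
      ring_nf
    have hGpos : ∀ n : ℕ, 1 ≤ n → 0 < GG n := by
      intro n hn
      have hn1 : (1:ℝ) ≤ (n:ℝ) := by exact_mod_cast hn
      have h1 := Real.Gamma_pos_of_pos (show 0 < a - δ + (n:ℝ) - 1 by linarith)
      have h2 := Real.Gamma_pos_of_pos (show 0 < b + δ + (n:ℝ) by linarith)
      have h3 := Real.Gamma_pos_of_pos (show 0 < a + (n:ℝ) - 1 by linarith)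
      have h4 := Real.Gamma_pos_of_pos (show 0 < b + (n:ℝ) by linarith)
      simp only [GG]
      positivity
    have hGstep : ∀ n : ℕ, 1 ≤ n → GG n ≤ GG (n+1) := by
      intro n hn
      have hn1 : (1:ℝ) ≤ (n:ℝ) := by exact_mod_cast hn
      have hx : 0 < a + (n:ℝ) - 1 := by linarith
      have hy : 0 < b + (n:ℝ) := by linarith
      have hux : 0 < a - δ + (n:ℝ) - 1 := by linarith
      have hvy : 0 < b + δ + (n:ℝ) := by linarith
      have hΓu := Real.Gamma_pos_of_pos hux
      have hΓv := Real.Gamma_pos_of_pos hvy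
      have hΓa := Real.Gamma_pos_of_pos hx
      have hΓb := Real.Gamma_pos_of_pos hy
      have g1 : Real.Gamma (a - δ + ((n:ℝ)+1) - 1)
          = (a - δ + (n:ℝ) - 1) * Real.Gamma (a - δ + (n:ℝ) - 1) := by
        rw [show a - δ + ((n:ℝ)+1) - 1 = (a - δ + (n:ℝ) - 1) + 1 by ring,
          Real.Gamma_add_one (ne_of_gt hux)]
      have g2 : Real.Gamma (b + δ + ((n:ℝ)+1))
          = (b + δ + (n:ℝ)) * Real.Gamma (b + δ + (n:ℝ)) := by
        rw [show b + δ + ((n:ℝ)+1) = (b + δ + (n:ℝ)) + 1 by ring,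
          Real.Gamma_add_one (ne_of_gt hvy)]
      have g3 : Real.Gamma (a + ((n:ℝ)+1) - 1)
          = (a + (n:ℝ) - 1) * Real.Gamma (a + (n:ℝ) - 1) := by
        rw [show a + ((n:ℝ)+1) - 1 = (a + (n:ℝ) - 1) + 1 by ring,
          Real.Gamma_add_one (ne_of_gt hx)]
      have g4 : Real.Gamma (b + ((n:ℝ)+1))
          = (b + (n:ℝ)) * Real.Gamma (b + (n:ℝ)) := by
        rw [show b + ((n:ℝ)+1) = (b + (n:ℝ)) + 1 by ring,
          Real.Gamma_add_one (ne_of_gt hy)]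
      simp only [GG]
      push_cast
      rw [g1, g2, g3, g4, div_le_div_iff₀ (by positivity) (by positivity)]
      have hP : 0 ≤ Real.Gamma (a-δ+(n:ℝ)-1) * Real.Gamma (b+δ+(n:ℝ))
          * (Real.Gamma (a+(n:ℝ)-1) * Real.Gamma (b+(n:ℝ))) := by positivity
      linarith [mul_nonneg hP hm.le]
    have hGmono : ∀ n : ℕ, 1 ≤ n → GG 1 ≤ GG n := by
      intro n hn
      induction n, hn using Nat.le_induction with
      | base => exact le_refl _
      | succ k hk ih => exact ih.trans (hGstep k hk)
    have hL : Tendsto (fun n : ℕ => (c/d-1)*(a+b+(n:ℝ)) + (a-δ)*((b+δ)+1))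
        atTop atBot := by
      apply tendsto_atBot_add_const_right
      exact (tendsto_atTop_add_const_left atTop (a+b)
        tendsto_natCast_atTop_atTop).const_mul_atTop_of_neg hε0
    have hG1L : Tendsto (fun n : ℕ => GG 1 * ((c/d-1)*(a+b+(n:ℝ)) + (a-δ)*((b+δ)+1)))
        atTop atBot := hL.const_mul_atBot (hGpos 1 le_rfl)
    apply tendsto_atBot_mono' atTop ?_ hG1L
    filter_upwards [hL.eventually (eventually_le_atBot 0), eventually_ge_atTop 1]
      with n hLn hn
    rw [hQG n]
    exact mul_le_mul_of_nonpos_right (hGmono n hn) hLn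
end

section
/- Let a₀ ∈ (0,1) be the minimal root of 4a(2−a)(1−a)²(a²−2a+2)² = 1. Let a ∈ [a₀, 1), let c, d > 0 with 0 < c/d ≤ ((a−1)² + 1)/(2(a−1)² + 1), and let δ₂ = (√(c/d) − 1)(1−a). If δ₂ < δ < 0, then the functions F(a−1−δ, 1−a+δ; 1; 1−x^d) and F(a−1, 1−a; 1; 1−x^c) of x are not comparable on (0,1): there exist x, y ∈ (0,1) such that F(a−1, 1−a; 1; 1−x^c) < F(a−1−δ, 1−a+δ; 1; 1−x^d) and F(a−1, 1−a; 1; 1−y^c) > F(a−1−δ, 1−a+δ; 1; 1−y^d). -/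
open Real Set Filter Topology

/-- The Gaussian hypergeometric function `F(a,b;c;x)`, defined as a power series
with Pochhammer (shifted factorial) coefficients. -/
noncomputable def hyp (a b c x : ℝ) : ℝ :=
  ∑' n : ℕ, ((∏ i ∈ Finset.range n, (a + i)) * (∏ i ∈ Finset.range n, (b + i)) /
    ((∏ i ∈ Finset.range n, (c + i)) * (Nat.factorial n))) * x ^ n

/-!
The partial sums of the coefficients of `F(-u, u; 1; z)` are the partial Euler products
`∏_{j<n} (1 - u² / (j + 1)²)` of `sin (π u) / (π u)`. For `0 < u < 1` these decrease, so every
coefficient after `1, -u²` is negative; this gives, for a constant `K`,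
`1 - u² z - K z² ≤ F(-u, u; 1; z) ≤ 1 - u² z` on `[0, 1]`, and Abel's theorem gives
`F(-u, u; 1; z) → sinc (π u)` as `z → 1⁻`.

With `u = 1 - a` and `v = 1 - a + δ` we have `0 < v < u < 1`. As `x → 0` the two functions tend
to `sinc (π u) < sinc (π v)`. As `x → 1` they are `1 - u² c (1 - x) + o(1 - x)` and
`1 - v² d (1 - x) + o(1 - x)`, and the bound on `δ` says exactly `u² c < v² d`.
-/

noncomputable def hypTerm (a b c : ℝ) (n : ℕ) : ℝ :=
  (∏ i ∈ Finset.range n, (a + i)) * (∏ i ∈ Finset.range n, (b + i)) /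
    ((∏ i ∈ Finset.range n, (c + i)) * n.factorial)

theorem hyp_eq_tsum (a b c x : ℝ) : hyp a b c x = ∑' n, hypTerm a b c n * x ^ n := rfl

@[simp]
theorem hypTerm_zero (a b c : ℝ) : hypTerm a b c 0 = 1 := by
  simp [hypTerm]

-- No hypothesis on `c + n`: if it vanishes, both sides are `0` by the convention `x / 0 = 0`.
theorem hypTerm_succ (a b c : ℝ) (n : ℕ) :
    hypTerm a b c (n + 1) = hypTerm a b c n * ((a + n) * (b + n) / ((c + n) * (n + 1))) := by
  simp only [hypTerm, Finset.prod_range_succ, Nat.factorial_succ, Nat.cast_mul, Nat.cast_succ]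
  rw [← mul_div_mul_comm]
  ring_nf

noncomputable def eulerProd (u : ℝ) (n : ℕ) : ℝ :=
  ∏ j ∈ Finset.range n, (1 - u ^ 2 / ((j : ℝ) + 1) ^ 2)

theorem eulerProd_succ (u : ℝ) (n : ℕ) :
    eulerProd u (n + 1) = eulerProd u n * (1 - u ^ 2 / ((n : ℝ) + 1) ^ 2) :=
  Finset.prod_range_succ _ _

@[simp]
theorem eulerProd_zero (u : ℝ) : eulerProd u 0 = 1 := Finset.prod_range_zero _

@[simp]
theorem eulerProd_one (u : ℝ) : eulerProd u 1 = 1 - u ^ 2 := by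
  simp [eulerProd]

theorem tendsto_eulerProd (u : ℝ) : Tendsto (eulerProd u) atTop (𝓝 (sinc (π * u))) := by
  rcases eq_or_ne u 0 with rfl | hu
  · simpa using tendsto_const_nhds.congr fun n => by simp [eulerProd]
  have hπu : π * u ≠ 0 := mul_ne_zero pi_ne_zero hu
  rw [sinc_of_ne_zero hπu]
  refine ((tendsto_euler_sin_prod u).div_const (π * u)).congr fun n => ?_
  rw [mul_div_right_comm, div_self hπu, one_mul, eulerProd]

theorem one_sub_sq_div_pos {u : ℝ} (hu : u ^ 2 < 1) (j : ℕ) :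
    0 < 1 - u ^ 2 / ((j : ℝ) + 1) ^ 2 := by
  have : u ^ 2 / ((j : ℝ) + 1) ^ 2 ≤ u ^ 2 :=
    div_le_self (sq_nonneg u) (one_le_pow₀ (by linarith [j.cast_nonneg (α := ℝ)]))
  linarith

theorem eulerProd_pos {u : ℝ} (hu : u ^ 2 < 1) (n : ℕ) : 0 < eulerProd u n :=
  Finset.prod_pos fun j _ => one_sub_sq_div_pos hu j

theorem eulerProd_succ_le {u : ℝ} (hu : u ^ 2 < 1) (n : ℕ) :
    eulerProd u (n + 1) ≤ eulerProd u n := by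
  rw [eulerProd_succ]
  refine mul_le_of_le_one_right (eulerProd_pos hu n).le (sub_le_self _ ?_)
  positivity

theorem sinc_pi_mul_pos {u : ℝ} (hu0 : 0 < u) (hu1 : u < 1) : 0 < sinc (π * u) := by
  have hπu : 0 < π * u := mul_pos pi_pos hu0
  rw [sinc_of_ne_zero hπu.ne']
  exact div_pos (sin_pos_of_pos_of_lt_pi hπu (by nlinarith [pi_pos])) hπu

theorem strictAntiOn_sinc_pi_mul : StrictAntiOn (fun u => sinc (π * u)) (Ico 0 1) := by
  intro v ⟨hv0, _⟩ u ⟨_, hu1⟩ hvu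
  have hu0 : 0 < u := hv0.trans_lt hvu
  have hv2u2 : v ^ 2 < u ^ 2 := pow_lt_pow_left₀ hvu hv0 two_ne_zero
  have hu2 : u ^ 2 < 1 := pow_lt_one₀ hu0.le hu1 two_ne_zero
  -- Every factor of the Euler product but the first is larger for `v` than for `u`.
  have hprod : ∀ n, eulerProd u (n + 1) * (1 - v ^ 2) ≤ eulerProd v (n + 1) * (1 - u ^ 2) := by
    intro n
    simp only [eulerProd, Finset.prod_range_succ' _ n]
    have hle : ∏ j ∈ Finset.range n, (1 - u ^ 2 / (((j + 1 : ℕ) : ℝ) + 1) ^ 2) ≤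
        ∏ j ∈ Finset.range n, (1 - v ^ 2 / (((j + 1 : ℕ) : ℝ) + 1) ^ 2) :=
      Finset.prod_le_prod (fun j _ => (one_sub_sq_div_pos hu2 _).le)
        fun j _ => sub_le_sub_left (div_le_div_of_nonneg_right hv2u2.le (by positivity)) 1
    have hpos : 0 ≤ (1 - u ^ 2) * (1 - v ^ 2) := by nlinarith
    simp only [Nat.cast_zero, zero_add, one_pow, div_one]
    nlinarith
  have hlim : sinc (π * u) * (1 - v ^ 2) ≤ sinc (π * v) * (1 - u ^ 2) :=
    le_of_tendsto_of_tendsto'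
      (((tendsto_add_atTop_iff_nat 1).mpr (tendsto_eulerProd u)).mul_const _)
      (((tendsto_add_atTop_iff_nat 1).mpr (tendsto_eulerProd v)).mul_const _) hprod
  have := sinc_pi_mul_pos hu0 hu1
  show sinc (π * u) < sinc (π * v)
  nlinarith

theorem hypTerm_neg_self_one_succ (u : ℝ) (n : ℕ) :
    hypTerm (-u) u 1 (n + 1) = eulerProd u (n + 1) - eulerProd u n := by
  induction n with
  | zero => simp [hypTerm_succ]; ring
  | succ n ih =>
    rw [hypTerm_succ, ih, eulerProd_succ u (n + 1), eulerProd_succ u n]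
    push_cast
    field_simp
    ring

theorem sum_range_succ_hypTerm_neg_self_one (u : ℝ) (n : ℕ) :
    ∑ i ∈ Finset.range (n + 1), hypTerm (-u) u 1 i = eulerProd u n := by
  induction n with
  | zero => simp
  | succ n ih => rw [Finset.sum_range_succ, ih, hypTerm_neg_self_one_succ]; ring

theorem tendsto_hyp_neg_self_one (u : ℝ) :
    Tendsto (hyp (-u) u 1) (𝓝[<] 1) (𝓝 (sinc (π * u))) := by
  have hpartial : Tendsto (fun n => ∑ i ∈ Finset.range n, hypTerm (-u) u 1 i) atTop
      (𝓝 (sinc (π * u))) :=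
    (tendsto_add_atTop_iff_nat 1).mp <| by
      simpa only [sum_range_succ_hypTerm_neg_self_one] using tendsto_eulerProd u
  exact Real.tendsto_tsum_powerSeries_nhdsWithin_lt hpartial

theorem hasSum_eulerProd_sub_succ {u : ℝ} (hu : u ^ 2 < 1) :
    HasSum (fun n => eulerProd u n - eulerProd u (n + 1)) (1 - sinc (π * u)) := by
  refine (hasSum_iff_tendsto_nat_of_nonneg (fun n => sub_nonneg.2 (eulerProd_succ_le hu n)) _).2 ?_
  simpa only [Finset.sum_range_sub', eulerProd, Finset.prod_range_zero] using
    tendsto_const_nhds.sub (tendsto_eulerProd u)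

theorem summable_mul_pow_succ {f : ℕ → ℝ} (hf : ∀ n, 0 ≤ f n) (hs : Summable f) {z : ℝ}
    (hz : z ∈ Icc 0 1) : Summable fun n => f n * z ^ (n + 1) :=
  hs.of_nonneg_of_le (fun n => mul_nonneg (hf n) (pow_nonneg hz.1 _))
    fun n => mul_le_of_le_one_right (hf n) (pow_le_one₀ hz.1 hz.2)

theorem hyp_neg_self_one_eq_one_sub_tsum {u z : ℝ} (hu : u ^ 2 < 1) (hz : z ∈ Icc 0 1) :
    hyp (-u) u 1 z = 1 - ∑' n, (eulerProd u n - eulerProd u (n + 1)) * z ^ (n + 1) := by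
  have hs := summable_mul_pow_succ (fun n => sub_nonneg.2 (eulerProd_succ_le hu n))
    (hasSum_eulerProd_sub_succ hu).summable hz
  have hterm : ∀ n, hypTerm (-u) u 1 (n + 1) * z ^ (n + 1) =
      -((eulerProd u n - eulerProd u (n + 1)) * z ^ (n + 1)) := fun n => by
    rw [hypTerm_neg_self_one_succ]; ring
  have hs' : Summable fun n => hypTerm (-u) u 1 n * z ^ n :=
    (summable_nat_add_iff 1).1 (by simpa only [hterm] using hs.neg)
  rw [hyp_eq_tsum, hs'.tsum_eq_zero_add]
  simp only [hterm, tsum_neg, hypTerm_zero, pow_zero, mul_one, sub_eq_add_neg]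

theorem mul_le_tsum_mul_pow_succ {f : ℕ → ℝ} (hf : ∀ n, 0 ≤ f n) (hs : Summable f)
    {z : ℝ} (hz : z ∈ Icc 0 1) : f 0 * z ≤ ∑' n, f n * z ^ (n + 1) := by
  simpa using (summable_mul_pow_succ hf hs hz).le_tsum 0
    fun n _ => mul_nonneg (hf n) (pow_nonneg hz.1 _)

theorem tsum_mul_pow_succ_le {f : ℕ → ℝ} (hf : ∀ n, 0 ≤ f n) (hs : Summable f) {z : ℝ}
    (hz : z ∈ Icc 0 1) : ∑' n, f n * z ^ (n + 1) ≤ f 0 * z + (∑' n, f n) * z ^ 2 := by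
  have htail : ∑' n, f (n + 1) * z ^ (n + 1 + 1) ≤ (∑' n, f (n + 1)) * z ^ 2 := by
    rw [← tsum_mul_right]
    exact ((summable_nat_add_iff 1).2 (summable_mul_pow_succ hf hs hz)).tsum_le_tsum
      (fun n => mul_le_mul_of_nonneg_left (pow_le_pow_of_le_one hz.1 hz.2 (by omega)) (hf _))
      (((summable_nat_add_iff 1).2 hs).mul_right _)
  rw [(summable_mul_pow_succ hf hs hz).tsum_eq_zero_add, hs.tsum_eq_zero_add, zero_add, pow_one]
  nlinarith [hf 0, sq_nonneg z]

theorem hyp_neg_self_one_le {u z : ℝ} (hu : u ^ 2 < 1) (hz : z ∈ Icc 0 1) :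
    hyp (-u) u 1 z ≤ 1 - u ^ 2 * z := by
  have := mul_le_tsum_mul_pow_succ (fun n => sub_nonneg.2 (eulerProd_succ_le hu n))
    (hasSum_eulerProd_sub_succ hu).summable hz
  rw [eulerProd_zero, eulerProd_one, sub_sub_cancel] at this
  rw [hyp_neg_self_one_eq_one_sub_tsum hu hz]
  linarith

theorem le_hyp_neg_self_one {u z : ℝ} (hu : u ^ 2 < 1) (hz : z ∈ Icc 0 1) :
    1 - u ^ 2 * z - (1 - sinc (π * u)) * z ^ 2 ≤ hyp (-u) u 1 z := by
  have hsum := hasSum_eulerProd_sub_succ hu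
  have := tsum_mul_pow_succ_le (fun n => sub_nonneg.2 (eulerProd_succ_le hu n)) hsum.summable hz
  rw [hsum.tsum_eq, eulerProd_zero, eulerProd_one, sub_sub_cancel] at this
  rw [hyp_neg_self_one_eq_one_sub_tsum hu hz]
  linarith

theorem one_sub_rpow_mem_Icc {x p : ℝ} (hx : x ∈ Ioo 0 1) (hp : 0 < p) :
    1 - x ^ p ∈ Icc 0 1 :=
  ⟨sub_nonneg.2 (rpow_lt_one hx.1.le hx.2 hp).le, sub_le_self _ (rpow_pos_of_pos hx.1 p).le⟩

theorem tendsto_one_sub_rpow_nhdsGT_zero {p : ℝ} (hp : 0 < p) :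
    Tendsto (fun x : ℝ => 1 - x ^ p) (𝓝[>] 0) (𝓝[<] 1) := by
  refine tendsto_nhdsWithin_iff.2 ⟨?_, ?_⟩
  · have h := ((continuousAt_rpow_const 0 p (Or.inr hp.le)).tendsto.const_sub 1).mono_left
      (nhdsWithin_le_nhds (s := Ioi 0))
    rwa [zero_rpow hp.ne', sub_zero] at h
  · filter_upwards [self_mem_nhdsWithin] with x (hx : 0 < x)
    exact sub_lt_self 1 (rpow_pos_of_pos hx p)

theorem hasDerivAt_one_sub_rpow_one (p : ℝ) : HasDerivAt (fun x : ℝ => 1 - x ^ p) (-p) 1 := by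
  simpa using ((hasDerivAt_rpow_const (x := 1) (p := p) (Or.inl one_ne_zero)).const_sub 1)

theorem HasDerivAt.eventually_nhdsLT_neg {f : ℝ → ℝ} {f' x : ℝ} (hf : HasDerivAt f f' x)
    (hf' : 0 < f') (hx : f x = 0) : ∀ᶠ y in 𝓝[<] x, f y < 0 := by
  filter_upwards [((hasDerivAt_iff_tendsto_slope.1 hf).mono_left (nhdsLT_le_nhdsNE x)).eventually
    (eventually_gt_nhds hf'), self_mem_nhdsWithin] with y hslope hy
  exact neg_of_slope_pos hy hslope hx

theorem exists_hyp_one_sub_rpow_lt {u v c d : ℝ} (hv : 0 ≤ v) (hvu : v < u) (hu : u < 1)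
    (hc : 0 < c) (hd : 0 < d) :
    ∃ x ∈ Ioo (0 : ℝ) 1, hyp (-u) u 1 (1 - x ^ c) < hyp (-v) v 1 (1 - x ^ d) := by
  have hlim := strictAntiOn_sinc_pi_mul ⟨hv, hvu.trans hu⟩ ⟨hv.trans hvu.le, hu⟩ hvu
  have hu := (tendsto_hyp_neg_self_one u).comp (tendsto_one_sub_rpow_nhdsGT_zero hc)
  have hv := (tendsto_hyp_neg_self_one v).comp (tendsto_one_sub_rpow_nhdsGT_zero hd)
  obtain ⟨x, hx, hxI⟩ := ((hu.eventually_lt hv hlim).and (Ioo_mem_nhdsGT zero_lt_one)).exists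
  exact ⟨x, hxI, hx⟩

theorem exists_hyp_one_sub_rpow_gt {u v c d : ℝ} (hu : u ^ 2 < 1) (hv : v ^ 2 < 1)
    (hc : 0 < c) (hd : 0 < d) (h : u ^ 2 * c < v ^ 2 * d) :
    ∃ y ∈ Ioo (0 : ℝ) 1, hyp (-u) u 1 (1 - y ^ c) > hyp (-v) v 1 (1 - y ^ d) := by
  -- With `z_p = 1 - y ^ p`, `u² z_c + K z_c² - v² z_d` vanishes at `y = 1` and has derivative
  -- `v² d - u² c > 0` there.
  have hderiv := (((hasDerivAt_one_sub_rpow_one c).const_mul (u ^ 2)).fun_add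
    (((hasDerivAt_one_sub_rpow_one c).fun_pow 2).const_mul (1 - sinc (π * u)))).fun_sub
    ((hasDerivAt_one_sub_rpow_one d).const_mul (v ^ 2))
  have hneg := hderiv.eventually_nhdsLT_neg (by simp; linarith) (by simp)
  obtain ⟨y, hy, hyI⟩ := (hneg.and (Ioo_mem_nhdsLT zero_lt_one)).exists
  refine ⟨y, hyI, ?_⟩
  have := le_hyp_neg_self_one hu (one_sub_rpow_mem_Icc hyI hc)
  have := hyp_neg_self_one_le hv (one_sub_rpow_mem_Icc hyI hd)
  linarith

theorem stmt15_general (a₀ a c d δ : ℝ)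
    (ha₀ : a₀ ∈ Ioo (0:ℝ) 1)
    (ha : a ∈ Ico a₀ 1)
    (hc : 0 < c) (hd : 0 < d)
    (hδ : (Real.sqrt (c / d) - 1) * (1 - a) < δ) (hδ0 : δ < 0) :
    (∃ x ∈ Ioo (0:ℝ) 1,
      hyp (a - 1) (1 - a) 1 (1 - x ^ c) < hyp (a - 1 - δ) (1 - a + δ) 1 (1 - x ^ d)) ∧
    (∃ y ∈ Ioo (0:ℝ) 1,
      hyp (a - 1) (1 - a) 1 (1 - y ^ c) > hyp (a - 1 - δ) (1 - a + δ) 1 (1 - y ^ d)) := by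
  rw [show a - 1 - δ = -(1 - a + δ) by ring, show a - 1 = -(1 - a) by ring]
  set u := 1 - a
  set v := 1 - a + δ
  have hu0 : 0 < u := by linarith [ha.2]
  have hu1 : u < 1 := by linarith [ha₀.1, ha.1]
  have hvu : v < u := by linarith
  have hsqrt : √(c / d) * u < v := by linarith
  have hv0 : 0 < v := lt_of_le_of_lt (by positivity) hsqrt
  have hsq : u ^ 2 * c < v ^ 2 * d := by
    have h := pow_lt_pow_left₀ hsqrt (by positivity) two_ne_zero
    rw [mul_pow, sq_sqrt (div_pos hc hd).le, div_mul_eq_mul_div, div_lt_iff₀ hd] at h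
    linarith
  exact ⟨exists_hyp_one_sub_rpow_lt hv0.le hvu hu1 hc hd,
    exists_hyp_one_sub_rpow_gt (pow_lt_one₀ hu0.le hu1 two_ne_zero)
      (pow_lt_one₀ hv0.le (hvu.trans hu1) two_ne_zero) hc hd hsq⟩

theorem stmt15 (a₀ a c d δ : ℝ)
    (ha₀ : a₀ ∈ Ioo (0:ℝ) 1)
    (hroot : 4 * a₀ * (2 - a₀) * (1 - a₀) ^ 2 * (a₀ ^ 2 - 2 * a₀ + 2) ^ 2 = 1)
    (hmin : ∀ x ∈ Ioo (0:ℝ) 1,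
      4 * x * (2 - x) * (1 - x) ^ 2 * (x ^ 2 - 2 * x + 2) ^ 2 = 1 → a₀ ≤ x)
    (ha : a ∈ Ico a₀ 1)
    (hc : 0 < c) (hd : 0 < d) (hcd : c / d ≤ ((a - 1) ^ 2 + 1) / (2 * (a - 1) ^ 2 + 1))
    (hδ : (Real.sqrt (c / d) - 1) * (1 - a) < δ) (hδ0 : δ < 0) :
    (∃ x ∈ Ioo (0:ℝ) 1,
      hyp (a - 1) (1 - a) 1 (1 - x ^ c) < hyp (a - 1 - δ) (1 - a + δ) 1 (1 - x ^ d)) ∧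
    (∃ y ∈ Ioo (0:ℝ) 1,
      hyp (a - 1) (1 - a) 1 (1 - y ^ c) > hyp (a - 1 - δ) (1 - a + δ) 1 (1 - y ^ d)) :=
  stmt15_general a₀ a c d δ ha₀ ha hc hd hδ hδ0
end
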